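/- arXiv:1711.07465 — 7 statements merged into one kernel-verified Lean document; each statement's English description precedes it below -/
import Mathlib

section
/- For any even positive integer r and any u ∈ {+1, -1}, the polynomial x^r - u·x^{r-1}·y - u·x·y^{r-1} + y^r is a sum of squares of polynomials in the variables x and y. -/
/-!
Put `b = u y`. Since `u² = 1` the polynomial is `(x - b) (x^(r-1) - b^(r-1))`, i.e. `(x - b)²` times
the geometric sum `G = ∑ x^i b^(r-2-i)` of even degree `r - 2`. That `G` is a sum of squares
(over any ring where `2` is invertible) follows by induction on the degree from the stronger claim
that `G - b^(r-2) / 2` is one: peeling off two terms gives the recursion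
`G' - b^r / 2 = x² (G - b^(r-2) / 2) + (x + b)² b^(r-2) / 2`.
-/

open MvPolynomial Finset

section GeomSum

variable {R : Type*} [CommRing R]

theorem sum_range_add_two_pow_mul_pow (x y : R) (n : ℕ) :
    ∑ i ∈ range (n + 2), x ^ i * y ^ (n + 1 - i)
      = x ^ 2 * ∑ i ∈ range n, x ^ i * y ^ (n - 1 - i) + x * y ^ n + y ^ (n + 1) := by
  have hshift : ∑ i ∈ range n, x ^ (i + 1 + 1) * y ^ (n + 1 - (i + 1 + 1))
      = x ^ 2 * ∑ i ∈ range n, x ^ i * y ^ (n - 1 - i) := by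
    rw [mul_sum]
    refine sum_congr rfl fun i _ => ?_
    rw [show n + 1 - (i + 1 + 1) = n - 1 - i by omega]
    ring
  rw [sum_range_succ', sum_range_succ', hshift, Nat.zero_add, Nat.add_sub_cancel, Nat.sub_zero]
  ring

variable [Invertible (2 : R)]

theorem isSumSq_invOf_two_mul_sq (a : R) : IsSumSq (⅟2 * a ^ 2) := by
  have h : ⅟2 * a ^ 2 = ⅟2 * a * (⅟2 * a) + ⅟2 * a * (⅟2 * a) := by
    linear_combination (-(⅟2 * a ^ 2)) * mul_invOf_self (2 : R)
  rw [h]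
  exact .add (.mul_self _) (.mul_self _)

theorem isSumSq_geom_sum₂_even_sub (x y : R) (k : ℕ) :
    IsSumSq (∑ i ∈ range (2 * k + 1), x ^ i * y ^ (2 * k - i) - ⅟2 * (y ^ k) ^ 2) := by
  induction k with
  | zero => simpa using isSumSq_invOf_two_mul_sq (1 : R)
  | succ k ih =>
    have hrec := sum_range_add_two_pow_mul_pow x y (2 * k + 1)
    have h : ∑ i ∈ range (2 * (k + 1) + 1), x ^ i * y ^ (2 * (k + 1) - i) - ⅟2 * (y ^ (k + 1)) ^ 2
        = x * x * (∑ i ∈ range (2 * k + 1), x ^ i * y ^ (2 * k - i) - ⅟2 * (y ^ k) ^ 2)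
          + ⅟2 * ((x + y) * y ^ k) ^ 2 := by
      simp only [show 2 * (k + 1) = 2 * k + 1 + 1 by ring, Nat.add_sub_cancel] at hrec ⊢
      rw [hrec]
      linear_combination (-(x * y ^ (2 * k + 1)) - y ^ (2 * k + 2)) * mul_invOf_self (2 : R)
    rw [h]
    exact .add (.mul (.mul_self x) ih) (isSumSq_invOf_two_mul_sq _)

theorem isSumSq_geom_sum₂_even (x y : R) (k : ℕ) :
    IsSumSq (∑ i ∈ range (2 * k + 1), x ^ i * y ^ (2 * k - i)) := by
  simpa using (isSumSq_geom_sum₂_even_sub x y k).add (isSumSq_invOf_two_mul_sq (y ^ k))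

theorem isSumSq_sub_mul_pow_sub_pow_odd (x y : R) (k : ℕ) :
    IsSumSq ((x - y) * (x ^ (2 * k + 1) - y ^ (2 * k + 1))) := by
  have h := geom_sum₂_mul x y (2 * k + 1)
  rw [Nat.add_sub_cancel] at h
  rw [← h, mul_left_comm]
  exact .mul (isSumSq_geom_sum₂_even x y k) (.mul_self _)

end GeomSum

/-- For any even positive integer `r` and any `u ∈ {+1, -1}`, the polynomial
`x^r - u*x^(r-1)*y - u*x*y^(r-1) + y^r` is a sum of squares of polynomials in `x, y`. -/
theorem stmt_0 (r : ℕ) (hr : Even r) (hr0 : 0 < r) (u : ℝ) (hu : u = 1 ∨ u = -1) :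
    IsSumSq ((X 0) ^ r - C u * (X 0) ^ (r - 1) * X 1 - C u * X 0 * (X 1) ^ (r - 1)
      + (X 1) ^ r : MvPolynomial (Fin 2) ℝ) := by
  obtain ⟨k, rfl⟩ : ∃ k, r = 2 * k + 2 := by
    obtain ⟨m, rfl⟩ := hr
    exact ⟨m - 1, by omega⟩
  have hu2 : (C u : MvPolynomial (Fin 2) ℝ) ^ 2 = 1 := by
    rcases hu with rfl | rfl <;> simp
  let _ : Invertible (2 : MvPolynomial (Fin 2) ℝ) :=
    (invertibleC (Fin 2) (2 : ℝ)).copy 2 (map_ofNat C 2).symm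
  have hfactor : (X 0 ^ (2 * k + 2) - C u * X 0 ^ (2 * k + 1) * X 1 - C u * X 0 * X 1 ^ (2 * k + 1)
      + X 1 ^ (2 * k + 2) : MvPolynomial (Fin 2) ℝ)
      = (X 0 - C u * X 1) * (X 0 ^ (2 * k + 1) - (C u * X 1) ^ (2 * k + 1)) := by
    rw [mul_pow, pow_succ (C u), pow_mul, hu2, one_pow, one_mul]
    linear_combination (-(X 1 : MvPolynomial (Fin 2) ℝ) ^ (2 * k + 2)) * hu2
  rw [show 2 * k + 2 - 1 = 2 * k + 1 by omega, hfactor]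
  exact isSumSq_sub_mul_pow_sub_pow_odd _ _ k
end

section
/- Let 𝒯_t be the set of tuples (i₀, i₁, ..., i_r) of nonnegative integers with i₀ ≥ 0, i_s ≥ 2 for all s ≥ 1, and i₀ + i₁ + ... + i_r = t. Then the sum over 𝒯_t of the multinomial coefficients t!/(i₀!·i₁!·⋯·i_r!) is at most (t/2 + 1)^t. -/
/-!
Zero-padding a tuple `(i₀, …, i_r)` to length `n = ⌊t/2⌋ + 1` turns it into a composition of `t`
into `n` nonnegative parts, and the term `t!/(i₀!⋯i_r!)` into the multinomial coefficient of that
composition. Since `i_s ≥ 2` for `s ≥ 1`, the tuple has length at most `n`, and since no `i_s`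
with `s ≥ 1` vanishes, padding is injective. So the sum is bounded by the sum of all multinomial
coefficients of `n` parts, which is `(1 + ⋯ + 1)^t = n^t`.
-/

open Finset Nat

namespace List

variable {α : Type*}

@[to_additive]
theorem prod_range_map_getD {M : Type*} [CommMonoid M] (l : List α) (f : α → M) {d : α}
    (hd : f d = 1) {n : ℕ} (hn : l.length ≤ n) :
    ∏ i ∈ Finset.range n, f (l.getD i d) = (l.map f).prod := by
  induction l generalizing n with
  | nil => simp [hd]
  | cons a l ih =>
    obtain ⟨m, rfl⟩ := exists_eq_add_one_of_ne_zero (by simp at hn; omega : n ≠ 0)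
    rw [Finset.prod_range_succ', map_cons, prod_cons, mul_comm]
    simp only [getD_cons_succ, getD_cons_zero]
    rw [ih (by simpa using hn)]

theorem sum_range_getD_zero {M : Type*} [AddCommMonoid M] (l : List M) {n : ℕ}
    (hn : l.length ≤ n) : ∑ i ∈ Finset.range n, l.getD i 0 = l.sum := by
  simpa using sum_range_map_getD l id rfl hn

theorem eq_of_getD_eq {l l' : List α} {d : α} (hl : ∀ x ∈ l, x ≠ d) (hl' : ∀ x ∈ l', x ≠ d)
    (h : ∀ i, l.getD i d = l'.getD i d) : l = l' := by
  induction l generalizing l' with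
  | nil =>
    cases l' with
    | nil => rfl
    | cons b l' => exact absurd (h 0).symm (hl' b mem_cons_self)
  | cons a l ih =>
    cases l' with
    | nil => exact absurd (h 0) (hl a mem_cons_self)
    | cons b l' =>
      exact congrArg₂ _ (by simpa using h 0) (ih (fun x hx => hl x (mem_cons_of_mem a hx))
        (fun x hx => hl' x (mem_cons_of_mem b hx)) fun i => by simpa using h (i + 1))

theorem eq_of_getD_eq_of_tail {l l' : List α} {d : α} (hl : l ≠ []) (hl' : l' ≠ [])
    (ht : ∀ x ∈ l.tail, x ≠ d) (ht' : ∀ x ∈ l'.tail, x ≠ d)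
    (h : ∀ i, l.getD i d = l'.getD i d) : l = l' := by
  obtain ⟨a, l, rfl⟩ := exists_cons_of_ne_nil hl
  obtain ⟨b, l', rfl⟩ := exists_cons_of_ne_nil hl'
  exact congrArg₂ _ (by simpa using h 0)
    (eq_of_getD_eq (l := l) ht ht' fun i => by simpa using h (i + 1))

theorem length_le_sum_div_two_add_one {l : List ℕ} (h : ∀ s ∈ l.tail, 2 ≤ s) :
    l.length ≤ l.sum / 2 + 1 := by
  cases l with
  | nil => simp
  | cons a l =>
    have := card_nsmul_le_sum l 2 h
    simp only [smul_eq_mul, length_cons, sum_cons] at this ⊢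
    omega

theorem getD_mem_piAntidiag_range {l : List ℕ} {n : ℕ} (hn : l.length ≤ n) :
    (l.getD · 0) ∈ piAntidiag (Finset.range n) l.sum := by
  refine mem_piAntidiag.2 ⟨sum_range_getD_zero l hn, fun i hi => ?_⟩
  by_contra hi'
  exact hi (getD_eq_default _ _ (hn.trans (not_lt.1 (mt Finset.mem_range.2 hi'))))

theorem multinomial_range_getD {l : List ℕ} {n : ℕ} (hn : l.length ≤ n) :
    Nat.multinomial (Finset.range n) (l.getD · 0) = l.sum ! / (l.map factorial).prod := by
  rw [Nat.multinomial, prod_range_map_getD l factorial rfl hn, sum_range_getD_zero l hn]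

end List

theorem Nat.sum_multinomial_piAntidiag {ι : Type*} [DecidableEq ι] (s : Finset ι) (t : ℕ) :
    ∑ k ∈ piAntidiag s t, Nat.multinomial s k = s.card ^ t := by
  simpa using (sum_pow_eq_sum_piAntidiag s (fun _ => (1 : ℕ)) t).symm

theorem stmt_6_general (t : ℕ) (S : Finset (List ℕ))
    (hS : ∀ l ∈ S, l ≠ [] ∧ l.sum = t ∧ ∀ s ∈ l.tail, 2 ≤ s) :
    ∑ l ∈ S, t.factorial / (l.map Nat.factorial).prod ≤ (t / 2 + 1) ^ t := by
  classical
  set n := t / 2 + 1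
  have hlen : ∀ l ∈ S, l.length ≤ n := fun l hl => by
    simpa only [(hS l hl).2.1] using List.length_le_sum_div_two_add_one (hS l hl).2.2
  have hinj : Set.InjOn (fun l : List ℕ => (l.getD · 0)) S := fun l hl l' hl' h =>
    List.eq_of_getD_eq_of_tail (hS l hl).1 (hS l' hl').1
      (fun x hx => by have := (hS l hl).2.2 x hx; omega)
      (fun x hx => by have := (hS l' hl').2.2 x hx; omega) (congrFun h)
  calc ∑ l ∈ S, t ! / (l.map factorial).prod
      = ∑ l ∈ S, Nat.multinomial (range n) (l.getD · 0) := sum_congr rfl fun l hl => by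
        rw [List.multinomial_range_getD (hlen l hl), (hS l hl).2.1]
    _ = ∑ k ∈ S.image (fun l : List ℕ => (l.getD · 0)), Nat.multinomial (range n) k :=
        (sum_image hinj).symm
    _ ≤ ∑ k ∈ piAntidiag (range n) t, Nat.multinomial (range n) k := by
        refine sum_le_sum_of_subset (image_subset_iff.2 fun l hl => ?_)
        simpa only [(hS l hl).2.1] using List.getD_mem_piAntidiag_range (hlen l hl)
    _ = n ^ t := by rw [Nat.sum_multinomial_piAntidiag, card_range]

/-- Let `𝒯_t` be the set of tuples `(i₀, i₁, ..., i_r)` of nonnegative integers with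
`i_s ≥ 2` for `s ≥ 1` and `i₀ + ⋯ + i_r = t` (represented as nonempty lists whose tail
entries are at least 2). Then the sum over `𝒯_t` of the multinomial coefficients
`t!/(i₀!⋯i_r!)` is at most `(⌊t/2⌋ + 1)^t`. -/
theorem stmt_6 (t : ℕ) (ht : 0 < t) (S : Finset (List ℕ))
    (hS : ∀ l ∈ S, l ≠ [] ∧ l.sum = t ∧ ∀ s ∈ l.tail, 2 ≤ s) :
    ∑ l ∈ S, t.factorial / (l.map Nat.factorial).prod ≤ (t / 2 + 1) ^ t :=
  stmt_6_general t S hS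
end

section
/- Define F_t(x) = Σ_{(i₀,...,i_r) ∈ 𝒯_t} (-1)^r · t!/(i₀!⋯i_r!) · (x-μ)^{⊗i₀} ⊗ M_{i₁} ⊗ ⋯ ⊗ M_{i_r}, where M_j = E[(X-μ)^{⊗j}] and 𝒯_t is the set of tuples with i₀ ≥ 0, i_s ≥ 2 for s ≥ 1 summing to t. Then E[⟨F_t(X), A⟩] = 0 for every order-t tensor A and every t ≥ 1. -/
open MeasureTheory

/-- The contraction of the block tensor product `M_{i₁} ⊗ M_{i₂} ⊗ ⋯` (blocks given by the
list `l`) against an index tuple `a : Fin l.sum → Fin d`. -/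
noncomputable def blockProd {d : ℕ} (M : (j : ℕ) → (Fin j → Fin d) → ℝ) :
    (l : List ℕ) → (Fin l.sum → Fin d) → ℝ
  | [], _ => 1
  | j :: rest, a =>
      M j (fun s => a ⟨s.val, by have := s.isLt; simp only [List.sum_cons]; omega⟩) *
      blockProd M rest
        (fun s => a ⟨j + s.val, by have := s.isLt; simp only [List.sum_cons]; omega⟩)

/-- The tensor `F_t(x) = Σ_{(i₀,…,i_r) ∈ 𝒯_t} (-1)^r (t!/(i₀!⋯i_r!))
(x-μ)^{⊗i₀} ⊗ M_{i₁} ⊗ ⋯ ⊗ M_{i_r}`, entrywise at index tuple `a`, where the sum ranges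
over the finite set `S` of tuples (represented as lists, head `i₀`, tail `(i₁,…,i_r)`). -/
noncomputable def Ftensor {d : ℕ} (μ : Fin d → ℝ) (M : (j : ℕ) → (Fin j → Fin d) → ℝ)
    (t : ℕ) (S : Finset (List ℕ)) (x : Fin d → ℝ) (a : Fin t → Fin d) : ℝ :=
  ∑ l ∈ S,
    if h : l.headI + l.tail.sum = t then
      (-1 : ℝ) ^ l.tail.length *
      ((t.factorial / (l.map Nat.factorial).prod : ℕ) : ℝ) *
      (∏ s : Fin l.headI,
        (x (a ⟨s.val, by have := s.isLt; omega⟩) - μ (a ⟨s.val, by have := s.isLt; omega⟩))) *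
      blockProd M l.tail (fun s => a ⟨l.headI + s.val, by have := s.isLt; omega⟩)
    else 0

lemma blockProd_congr {d : ℕ} (M : (j : ℕ) → (Fin j → Fin d) → ℝ) (l : List ℕ)
    {b b' : Fin l.sum → Fin d} (h : ∀ i, b i = b' i) :
    blockProd M l b = blockProd M l b' := by
  rw [funext h]

lemma blockProd_cons {d : ℕ} (M : (j : ℕ) → (Fin j → Fin d) → ℝ) (j : ℕ) (rest : List ℕ)
    (b : Fin (j :: rest).sum → Fin d) :
    blockProd M (j :: rest) b =
      M j (fun s => b ⟨s.val, by have := s.isLt; simp only [List.sum_cons]; omega⟩) *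
      blockProd M rest
        (fun s => b ⟨j + s.val, by have := s.isLt; simp only [List.sum_cons]; omega⟩) := rfl

/-- the integrated term corresponding to the list `l` -/
noncomputable def gAux {d : ℕ} (M : (j : ℕ) → (Fin j → Fin d) → ℝ) (t : ℕ)
    (a : Fin t → Fin d) (l : List ℕ) : ℝ :=
  if h : l.sum = t then
    (-1 : ℝ) ^ l.tail.length *
      ((t.factorial / (l.map Nat.factorial).prod : ℕ) : ℝ) *
      blockProd M l (fun s => a ⟨s.val, by have := s.isLt; omega⟩)
  else 0

lemma gAux_cons_zero {d : ℕ} (M : (j : ℕ) → (Fin j → Fin d) → ℝ) (t : ℕ)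
    (hM0 : ∀ b : Fin 0 → Fin d, M 0 b = 1) (a : Fin t → Fin d)
    (m : List ℕ) (hm : m ≠ []) :
    gAux M t a (0 :: m) = - gAux M t a m := by
  obtain ⟨m0, mt, rfl⟩ := List.exists_cons_of_ne_nil hm
  unfold gAux
  by_cases h : (m0 :: mt).sum = t
  · have h0 : (0 :: m0 :: mt).sum = t := by simpa using h
    rw [dif_pos h0, dif_pos h, blockProd_cons, hM0, one_mul]
    rw [blockProd_congr M (m0 :: mt)
      (b' := fun s => a ⟨s.val, by have := s.isLt; omega⟩)
      (fun i => congrArg a (Fin.ext (Nat.zero_add _)))]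
    have hcoef : ((0 :: m0 :: mt).map Nat.factorial).prod =
        ((m0 :: mt).map Nat.factorial).prod := by simp [Nat.factorial]
    simp only [List.tail_cons, List.length_cons, hcoef, pow_succ]
    ring
  · rw [dif_neg (by simpa using h), dif_neg h, neg_zero]

lemma gAux_headI_one {d : ℕ} (M : (j : ℕ) → (Fin j → Fin d) → ℝ) (t : ℕ)
    (hM1 : ∀ b : Fin 1 → Fin d, M 1 b = 0) (a : Fin t → Fin d)
    (l : List ℕ) (hl : l.headI = 1) : gAux M t a l = 0 := by
  cases l with
  | nil => simp at hl
  | cons m0 mt =>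
    simp only [List.headI] at hl
    subst hl
    unfold gAux
    by_cases h : (1 :: mt).sum = t
    · rw [dif_pos h, blockProd_cons, hM1]
      ring
    · rw [dif_neg h]

lemma sum_gAux {d : ℕ} (M : (j : ℕ) → (Fin j → Fin d) → ℝ) (t : ℕ) (ht : 1 ≤ t)
    (hM0 : ∀ b : Fin 0 → Fin d, M 0 b = 1) (hM1 : ∀ b : Fin 1 → Fin d, M 1 b = 0)
    (S : Finset (List ℕ))
    (hS : ∀ l, l ∈ S ↔ (l ≠ [] ∧ l.sum = t ∧ ∀ s ∈ l.tail, 2 ≤ s))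
    (a : Fin t → Fin d) :
    ∑ l ∈ S, gAux M t a l = 0 := by
  have tail_ne : ∀ l ∈ S, l.headI = 0 → l.tail ≠ [] := by
    intro l hl h0 htl
    obtain ⟨hne, hsum, _⟩ := (hS l).1 hl
    obtain ⟨x, m, rfl⟩ := List.exists_cons_of_ne_nil hne
    simp only [List.headI] at h0
    simp only [List.tail_cons] at htl
    subst h0 htl
    simp at hsum
    omega
  refine Finset.sum_involution
    (fun l _ => if l.headI = 0 then l.tail else if l.headI = 1 then l else 0 :: l)
    ?_ ?_ ?_ ?_
  · -- f l + f (φ l) = 0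
    intro l hl
    beta_reduce
    obtain ⟨hne, hsum, htail⟩ := (hS l).1 hl
    by_cases h0 : l.headI = 0
    · rw [if_pos h0]
      obtain ⟨x, m, rfl⟩ := List.exists_cons_of_ne_nil hne
      simp only [List.headI] at h0; subst h0
      simp only [List.tail_cons]
      rw [gAux_cons_zero M t hM0 a m (by simpa using tail_ne _ hl rfl)]
      ring
    · rw [if_neg h0]
      by_cases h1 : l.headI = 1
      · rw [if_pos h1, gAux_headI_one M t hM1 a l h1]
        ring
      · rw [if_neg h1, gAux_cons_zero M t hM0 a l hne]
        ring
  · -- f l ≠ 0 → φ l ≠ l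
    intro l hl hf
    beta_reduce
    obtain ⟨hne, hsum, htail⟩ := (hS l).1 hl
    obtain ⟨x, m, rfl⟩ := List.exists_cons_of_ne_nil hne
    by_cases h0 : (x :: m).headI = 0
    · rw [if_pos h0]
      simp only [List.tail_cons]
      exact fun h => List.cons_ne_self x m h.symm
    · rw [if_neg h0]
      by_cases h1 : (x :: m).headI = 1
      · exact absurd (gAux_headI_one M t hM1 a _ h1) hf
      · rw [if_neg h1]
        exact List.cons_ne_self 0 (x :: m)
  · -- φ l ∈ S
    intro l hl
    beta_reduce
    obtain ⟨hne, hsum, htail⟩ := (hS l).1 hl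
    by_cases h0 : l.headI = 0
    · rw [if_pos h0]
      refine (hS _).2 ⟨tail_ne _ hl h0, ?_, fun s hs => htail s (List.tail_subset _ hs)⟩
      obtain ⟨x, m, rfl⟩ := List.exists_cons_of_ne_nil hne
      simp only [List.headI] at h0; subst h0
      simpa using hsum
    · rw [if_neg h0]
      by_cases h1 : l.headI = 1
      · rw [if_pos h1]; exact hl
      · rw [if_neg h1]
        refine (hS _).2 ⟨by simp, by simpa using hsum, fun s hs => ?_⟩
        simp only [List.tail_cons] at hs
        obtain ⟨x, m, rfl⟩ := List.exists_cons_of_ne_nil hne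
        rcases List.mem_cons.1 hs with rfl | hs'
        · simp only [List.headI] at h0 h1; omega
        · exact htail s hs'
  · -- involution
    intro l hl
    beta_reduce
    obtain ⟨hne, hsum, htail⟩ := (hS l).1 hl
    obtain ⟨x, m, rfl⟩ := List.exists_cons_of_ne_nil hne
    by_cases h0 : x = 0
    · subst h0
      have hm : m ≠ [] := by simpa using tail_ne _ hl rfl
      have h2 : 2 ≤ m.headI := by
        obtain ⟨y, m', rfl⟩ := List.exists_cons_of_ne_nil hm
        exact htail y (by simp)
      have hA : ¬ m.headI = 0 := by omega
      have hB : ¬ m.headI = 1 := by omega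
      simp [hA, hB]
    · by_cases h1 : x = 1
      · subst h1; simp
      · simp [h0, h1]

/-- With `M_j` the centered moment tensors of `X` (`M₁ = 0`) and `𝒯_t` the set of tuples
`(i₀, …, i_r)` with `i_s ≥ 2` for `s ≥ 1` summing to `t`, one has `E[⟨F_t(X), A⟩] = 0`
for every order-`t` tensor `A` and every `t ≥ 1`. -/
theorem stmt_10 {Ω : Type*} [MeasurableSpace Ω] (P : Measure Ω) [IsProbabilityMeasure P]
    {d : ℕ} (t : ℕ) (ht : 1 ≤ t) (Xv : Ω → Fin d → ℝ)
    (μ : Fin d → ℝ) (hμ : ∀ i, μ i = ∫ ω, Xv ω i ∂P)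
    (hint : ∀ (j : ℕ), j ≤ t → ∀ a : Fin j → Fin d,
      Integrable (fun ω => ∏ s, (Xv ω (a s) - μ (a s))) P)
    (M : (j : ℕ) → (Fin j → Fin d) → ℝ)
    (hM : ∀ (j : ℕ) (a : Fin j → Fin d), M j a = ∫ ω, ∏ s, (Xv ω (a s) - μ (a s)) ∂P)
    (S : Finset (List ℕ))
    (hS : ∀ l, l ∈ S ↔ (l ≠ [] ∧ l.sum = t ∧ ∀ s ∈ l.tail, 2 ≤ s)) :
    ∀ A : (Fin t → Fin d) → ℝ,
      ∫ ω, ∑ a : Fin t → Fin d, Ftensor μ M t S (Xv ω) a * A a ∂P = 0 := by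
  intro A
  have hM0 : ∀ b : Fin 0 → Fin d, M 0 b = 1 := by
    intro b; rw [hM]; simp
  have hM1 : ∀ b : Fin 1 → Fin d, M 1 b = 0 := by
    intro b
    rw [hM]
    have h1 : Integrable (fun ω => Xv ω (b 0) - μ (b 0)) P := by
      have := hint 1 ht b
      simpa using this
    have h2 : Integrable (fun ω => Xv ω (b 0)) P := by
      have h3 := h1.add (integrable_const (μ (b 0)))
      have h4 : (fun ω => Xv ω (b 0) - μ (b 0) + μ (b 0)) = fun ω => Xv ω (b 0) := by
        funext ω; ring
      exact h4 ▸ h3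
    simp only [Fin.prod_univ_one]
    rw [integral_sub h2 (integrable_const _)]
    simp [← hμ (b 0)]
  -- integrability of each Ftensor summand
  have hintl : ∀ (a : Fin t → Fin d) (l : List ℕ),
      Integrable (fun ω =>
        if h : l.headI + l.tail.sum = t then
          (-1 : ℝ) ^ l.tail.length *
          ((t.factorial / (l.map Nat.factorial).prod : ℕ) : ℝ) *
          (∏ s : Fin l.headI,
            (Xv ω (a ⟨s.val, by have := s.isLt; omega⟩) -
              μ (a ⟨s.val, by have := s.isLt; omega⟩))) *
          blockProd M l.tail (fun s => a ⟨l.headI + s.val, by have := s.isLt; omega⟩)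
        else 0) P := by
    intro a l
    by_cases h : l.headI + l.tail.sum = t
    · simp only [dif_pos h]
      exact (((hint l.headI (by omega) _).const_mul _).mul_const _)
    · simp only [dif_neg h]
      exact integrable_const 0
  have hFint : ∀ a : Fin t → Fin d,
      Integrable (fun ω => Ftensor μ M t S (Xv ω) a) P := by
    intro a
    simp only [Ftensor]
    exact integrable_finset_sum _ fun l _ => hintl a l
  have hFval : ∀ a : Fin t → Fin d,
      ∫ ω, Ftensor μ M t S (Xv ω) a ∂P = ∑ l ∈ S, gAux M t a l := by
    intro a
    simp only [Ftensor]
    rw [integral_finset_sum _ fun l _ => hintl a l]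
    refine Finset.sum_congr rfl fun l hl => ?_
    obtain ⟨hne, hsum, htail⟩ := (hS l).1 hl
    have hc : l.headI + l.tail.sum = t := by
      cases l with
      | nil => simp_all
      | cons x m => simpa using hsum
    simp only [dif_pos hc]
    rw [integral_mul_const, integral_const_mul, ← hM]
    unfold gAux
    rw [dif_pos hsum]
    obtain ⟨x, m, rfl⟩ := List.exists_cons_of_ne_nil hne
    rw [blockProd_cons]
    exact mul_assoc _ _ _
  calc ∫ ω, ∑ a : Fin t → Fin d, Ftensor μ M t S (Xv ω) a * A a ∂P
      = ∑ a : Fin t → Fin d, ∫ ω, Ftensor μ M t S (Xv ω) a * A a ∂P := by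
        exact integral_finset_sum _ fun a _ => (hFint a).mul_const _
    _ = ∑ a : Fin t → Fin d, (∫ ω, Ftensor μ M t S (Xv ω) a ∂P) * A a := by
        refine Finset.sum_congr rfl fun a _ => ?_
        exact integral_mul_const _ _
    _ = 0 := by
        refine Finset.sum_eq_zero fun a _ => ?_
        rw [hFval a, sum_gAux M t ht hM0 hM1 S hS a, zero_mul]
end

section
/- For every symmetric order-t tensor A, the gradient of the polynomial x ↦ ⟨F_t(x), A⟩ satisfies ∇⟨F_t(x), A⟩ = t·⟨F_{t-1}(x) ⊗ I, A⟩ (as a vector-valued identity, where the contraction of A with F_{t-1}(x)⊗I leaves one free index), where F_t is the tensor polynomial F_t(x) = Σ_{(i₀,...,i_r) ∈ 𝒯_t} (-1)^r · t!/(i₀!⋯i_r!) · (x-μ)^{⊗i₀} ⊗ M_{i₁} ⊗ ⋯ ⊗ M_{i_r}. -/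
open Finset

theorem Fin.castLE_succAbove {m n : ℕ} (h : m + 1 ≤ n + 1) (s : Fin (m + 1)) (u : Fin m) :
    castLE h (s.succAbove u) = (castLE h s).succAbove (castLE (by omega) u) := by
  ext
  simp only [Fin.succAbove, Fin.lt_def, Fin.val_castSucc, Fin.val_castLE]
  split_ifs <;> simp_all

theorem Fin.insertNth_apply_succ_of_le_castSucc {α : Type*} {n : ℕ} {p : Fin (n + 1)}
    {i : Fin n} (h : p ≤ i.castSucc) (k : α) (a : Fin n → α) :
    Fin.insertNth (α := fun _ => α) p k a i.succ = a i := by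
  rw [← Fin.succAbove_of_le_castSucc p i h, Fin.insertNth_apply_succAbove]

theorem Fin.insertNth_castLE_comp_castLE_succAbove {α : Type*} {m n : ℕ} (h : m + 1 ≤ n + 1)
    (s : Fin (m + 1)) (k : α) (a : Fin n → α) :
    (castLE h s).insertNth k a ∘ castLE h ∘ s.succAbove = a ∘ castLE (by omega) := by
  funext u
  simp [Fin.castLE_succAbove, Fin.insertNth_apply_succAbove]

theorem Fin.prod_univ_erase_eq_prod_succAbove {M : Type*} [CommMonoid M] {m : ℕ}
    (f : Fin (m + 1) → M) (s : Fin (m + 1)) :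
    ∏ i ∈ univ.erase s, f i = ∏ i, f (s.succAbove i) := by
  have herase : univ.erase s = univ.map s.succAboveEmb := by ext j; simp
  rw [herase, prod_map, coe_succAboveEmb]

theorem Fintype.sum_ite_apply_eq_insertNth {α β : Type*} [Fintype α] [DecidableEq α]
    [AddCommMonoid β] {n : ℕ} (p : Fin (n + 1)) (k : α) (F : (Fin (n + 1) → α) → β) :
    ∑ a : Fin (n + 1) → α, (if a p = k then F a else 0) = ∑ a', F (p.insertNth k a') := by
  rw [← (Fin.insertNthEquiv (fun _ => α) p).sum_comp, Fintype.sum_prod_type]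
  simp [Fin.insertNthEquiv]

theorem apply_insertNth_eq_apply_snoc {α β : Type*} {n : ℕ} {A : (Fin (n + 1) → α) → β}
    (hA : ∀ (σ : Equiv.Perm (Fin (n + 1))) a, A (a ∘ σ) = A a) (p : Fin (n + 1)) (k : α)
    (a : Fin n → α) : A (p.insertNth k a) = A (Fin.snoc a k) := by
  rw [← Fin.insertNth_last', ← Fin.cons_comp_cycleRange, ← Fin.cons_comp_cycleRange, hA, hA]

theorem List.prod_map_factorial_dvd_factorial_sum (l : List ℕ) :
    (l.map Nat.factorial).prod ∣ l.sum.factorial := by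
  induction l with
  | nil => simp
  | cons a l ih =>
    rw [List.map_cons, List.prod_cons, List.sum_cons]
    exact (mul_dvd_mul_left _ ih).trans (Nat.factorial_mul_factorial_dvd_factorial_add _ _)

theorem Nat.factorial_div_factorial_mul_eq_choose_mul {a b R : ℕ} (hR : R ∣ b.factorial) :
    (a + b).factorial / (a.factorial * R) = (a + b).choose a * (b.factorial / R) := by
  have hR0 : 0 < R := Nat.pos_of_dvd_of_pos hR b.factorial_pos
  obtain ⟨q, hq⟩ := hR
  have hfac : (a + b).factorial = (a + b).choose a * q * (a.factorial * R) := by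
    rw [← Nat.choose_mul_factorial_mul_factorial (Nat.le_add_right a b), Nat.add_sub_cancel_left,
      hq]
    ring
  rw [hfac, hq, Nat.mul_div_cancel _ (by positivity), Nat.mul_div_cancel_left _ hR0]

noncomputable def centeredMonomial {ι 𝕜 : Type*} [CommRing 𝕜] {m : ℕ} (μ : ι → 𝕜)
    (p : Fin m → ι) (y : ι → 𝕜) : 𝕜 :=
  ∏ s, (y (p s) - μ (p s))

section

variable {ι 𝕜 : Type*} [Fintype ι] [NontriviallyNormedField 𝕜] (μ x : ι → 𝕜)

theorem hasFDerivAt_centeredMonomial {m : ℕ} (p : Fin m → ι) :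
    HasFDerivAt (centeredMonomial μ p)
      (∑ s, (∏ s' ∈ univ.erase s, (x (p s') - μ (p s'))) •
        ContinuousLinearMap.proj (R := 𝕜) (φ := fun _ => 𝕜) (p s)) x :=
  HasFDerivAt.finsetProd fun s _ => (hasFDerivAt_apply (p s) x).sub_const (μ (p s))

theorem differentiable_centeredMonomial {m : ℕ} (p : Fin m → ι) :
    Differentiable 𝕜 (centeredMonomial μ p) :=
  fun x => (hasFDerivAt_centeredMonomial μ x p).differentiableAt

theorem fderiv_centeredMonomial_apply_single [DecidableEq ι] {m : ℕ} (p : Fin (m + 1) → ι)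
    (k : ι) :
    fderiv 𝕜 (centeredMonomial μ p) x (Pi.single k 1) =
      ∑ s, if p s = k then centeredMonomial μ (p ∘ s.succAbove) x else 0 := by
  simp [(hasFDerivAt_centeredMonomial μ x p).fderiv, Pi.single_apply,
    Fin.prod_univ_erase_eq_prod_succAbove, centeredMonomial, eq_comm]

end

noncomputable def Fcoeff (t : ℕ) (l : List ℕ) : ℝ :=
  (-1) ^ l.tail.length * ((t.factorial / (l.map Nat.factorial).prod : ℕ) : ℝ)

noncomputable def FtensorTerm {d : ℕ} (μ : Fin d → ℝ) (M : (j : ℕ) → (Fin j → Fin d) → ℝ)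
    (t : ℕ) (l : List ℕ) (x : Fin d → ℝ) (a : Fin t → Fin d) : ℝ :=
  if h : l.headI + l.tail.sum = t then
    Fcoeff t l * centeredMonomial μ (a ∘ Fin.castLE (show l.headI ≤ t by omega)) x *
      blockProd M l.tail (fun u => a ⟨l.headI + u, by omega⟩)
  else 0

theorem Ftensor_eq_sum_FtensorTerm {d : ℕ} (μ : Fin d → ℝ)
    (M : (j : ℕ) → (Fin j → Fin d) → ℝ) (t : ℕ) (S : Finset (List ℕ)) (x : Fin d → ℝ)
    (a : Fin t → Fin d) :
    Ftensor μ M t S x a = ∑ l ∈ S, FtensorTerm μ M t l x a :=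
  rfl

theorem add_one_mul_Fcoeff_succ_cons {n j : ℕ} {tl : List ℕ} (h : j + tl.sum = n) :
    ((j : ℝ) + 1) * Fcoeff (n + 1) ((j + 1) :: tl) = (n + 1) * Fcoeff n (j :: tl) := by
  have hR := List.prod_map_factorial_dvd_factorial_sum tl
  set R := (tl.map Nat.factorial).prod
  have key : (j + 1) * ((n + 1).factorial / ((j + 1).factorial * R)) =
      (n + 1) * (n.factorial / (j.factorial * R)) := by
    subst h
    have hsucc : j + tl.sum + 1 = j + 1 + tl.sum := by ring
    rw [hsucc, Nat.factorial_div_factorial_mul_eq_choose_mul hR,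
      Nat.factorial_div_factorial_mul_eq_choose_mul hR, ← hsucc, ← mul_assoc, ← mul_assoc,
      mul_comm (j + 1), ← Nat.add_one_mul_choose_eq]
  have hcast := congrArg (Nat.cast (R := ℝ)) key
  push_cast at hcast
  simp only [Fcoeff, List.tail_cons, List.map_cons, List.prod_cons]
  linear_combination (-1) ^ tl.length * hcast

section

variable {d : ℕ} (μ : Fin d → ℝ) (M : (j : ℕ) → (Fin j → Fin d) → ℝ)

theorem FtensorTerm_cons {t j : ℕ} {tl : List ℕ} (h : j + tl.sum = t) (y : Fin d → ℝ)
    (a : Fin t → Fin d) :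
    FtensorTerm μ M t (j :: tl) y a =
      Fcoeff t (j :: tl) * centeredMonomial μ (a ∘ Fin.castLE (show j ≤ t by omega)) y *
        blockProd M tl (fun u => a ⟨j + u, by omega⟩) :=
  dif_pos h

theorem differentiable_FtensorTerm (t : ℕ) (l : List ℕ) (a : Fin t → Fin d) :
    Differentiable ℝ (fun y => FtensorTerm μ M t l y a) := by
  unfold FtensorTerm
  split_ifs
  · exact ((differentiable_centeredMonomial μ _).const_mul _).mul_const _
  · exact differentiable_const 0

theorem fderiv_sum_Ftensor_mul_apply (t : ℕ) (S : Finset (List ℕ)) (A : (Fin t → Fin d) → ℝ)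
    (x v : Fin d → ℝ) :
    fderiv ℝ (fun y => ∑ a, Ftensor μ M t S y a * A a) x v =
      ∑ l ∈ S, ∑ a, fderiv ℝ (fun y => FtensorTerm μ M t l y a) x v * A a := by
  have hsum : (fun y => ∑ a, Ftensor μ M t S y a * A a) =
      fun y => ∑ l ∈ S, ∑ a, FtensorTerm μ M t l y a * A a := by
    funext y
    simp only [Ftensor_eq_sum_FtensorTerm, sum_mul]
    exact sum_comm
  have hdiff := differentiable_FtensorTerm μ M t
  rw [hsum, fderiv_fun_sum fun l _ => by fun_prop]
  simp only [_root_.sum_apply]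
  refine sum_congr rfl fun l _ => ?_
  rw [fderiv_fun_sum fun a _ => by fun_prop]
  refine (_root_.sum_apply _ _ _).trans (sum_congr rfl fun a _ => ?_)
  rw [fderiv_mul_const ((hdiff l a).differentiableAt), smul_apply, smul_eq_mul, mul_comm]

theorem fderiv_FtensorTerm_zero_cons (t : ℕ) (tl : List ℕ) (a : Fin t → Fin d)
    (x : Fin d → ℝ) :
    fderiv ℝ (fun y => FtensorTerm μ M t (0 :: tl) y a) x = 0 := by
  by_cases h : 0 + tl.sum = t
  · simp [FtensorTerm_cons μ M h, centeredMonomial]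
  · have : ∀ y, FtensorTerm μ M t (0 :: tl) y a = 0 := fun y => dif_neg h
    simp [this]

theorem fderiv_FtensorTerm_succ_cons_apply_single {t j : ℕ} {tl : List ℕ}
    (h : j + 1 + tl.sum = t) (a : Fin t → Fin d) (x : Fin d → ℝ) (k : Fin d) :
    fderiv ℝ (fun y => FtensorTerm μ M t ((j + 1) :: tl) y a) x (Pi.single k 1) =
      ∑ s : Fin (j + 1), if a (Fin.castLE (by omega) s) = k then
        Fcoeff t ((j + 1) :: tl) *
          centeredMonomial μ (a ∘ Fin.castLE (by omega) ∘ s.succAbove) x *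
          blockProd M tl (fun u => a ⟨j + 1 + u, by omega⟩)
      else 0 := by
  have hmono := differentiable_centeredMonomial μ (a ∘ Fin.castLE (show j + 1 ≤ t by omega)) x
  simp only [FtensorTerm_cons μ M h]
  rw [fderiv_mul_const (hmono.const_mul _), fderiv_const_mul hmono]
  simp only [smul_apply, smul_eq_mul, fderiv_centeredMonomial_apply_single, mul_sum]
  refine sum_congr rfl fun s _ => ?_
  rw [Function.comp_apply, Function.comp_assoc]
  split_ifs <;> ring

theorem sum_fderiv_FtensorTerm_succ_cons_mul {n j : ℕ} {tl : List ℕ} (h : j + tl.sum = n)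
    {A : (Fin (n + 1) → Fin d) → ℝ} (hA : ∀ (σ : Equiv.Perm (Fin (n + 1))) a, A (a ∘ σ) = A a)
    (x : Fin d → ℝ) (k : Fin d) :
    ∑ a, fderiv ℝ (fun y => FtensorTerm μ M (n + 1) ((j + 1) :: tl) y a) x (Pi.single k 1) *
        A a =
      (n + 1) * ∑ a', FtensorTerm μ M n (j :: tl) x a' * A (Fin.snoc a' k) := by
  have h' : j + 1 + tl.sum = n + 1 := by omega
  have hblock : ∀ (s : Fin (j + 1)) (a' : Fin n → Fin d),
      (fun u : Fin tl.sum =>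
        Fin.insertNth (α := fun _ => Fin d) (Fin.castLE (show j + 1 ≤ n + 1 by omega) s) k a'
          ⟨j + 1 + u, by omega⟩) =
        fun u : Fin tl.sum => a' ⟨j + u, by omega⟩ := by
    intro s a'
    funext u
    have hu : (⟨j + 1 + u, by omega⟩ : Fin (n + 1)) = Fin.succ ⟨j + u, by omega⟩ :=
      Fin.ext (by simp; omega)
    rw [hu, Fin.insertNth_apply_succ_of_le_castSucc (by simp [Fin.le_def]; omega)]
  calc ∑ a, fderiv ℝ (fun y => FtensorTerm μ M (n + 1) ((j + 1) :: tl) y a) x (Pi.single k 1) *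
        A a
      = ∑ s : Fin (j + 1), ∑ a, if a (Fin.castLE (by omega) s) = k then
          Fcoeff (n + 1) ((j + 1) :: tl) *
            centeredMonomial μ (a ∘ Fin.castLE (by omega) ∘ s.succAbove) x *
            blockProd M tl (fun u => a ⟨j + 1 + u, by omega⟩) * A a
        else 0 := by
        simp only [fderiv_FtensorTerm_succ_cons_apply_single μ M h', sum_mul, ite_mul, zero_mul]
        exact sum_comm
    _ = ∑ s : Fin (j + 1), ∑ a' : Fin n → Fin d,
          Fcoeff (n + 1) ((j + 1) :: tl) *
            centeredMonomial μ (a' ∘ Fin.castLE (show j ≤ n by omega)) x *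
            blockProd M tl (fun u => a' ⟨j + u, by omega⟩) * A (Fin.snoc a' k) := by
        refine sum_congr rfl fun s _ => ?_
        rw [Fintype.sum_ite_apply_eq_insertNth]
        simp only [Fin.insertNth_castLE_comp_castLE_succAbove, hblock,
          apply_insertNth_eq_apply_snoc hA]
    _ = (n + 1) * ∑ a', FtensorTerm μ M n (j :: tl) x a' * A (Fin.snoc a' k) := by
        rw [sum_const, card_univ, Fintype.card_fin, nsmul_eq_mul, mul_sum, mul_sum]
        simp only [FtensorTerm_cons μ M h]
        refine sum_congr rfl fun a' _ => ?_
        push_cast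
        linear_combination (centeredMonomial μ (a' ∘ Fin.castLE (show j ≤ n by omega)) x *
          blockProd M tl (fun u => a' ⟨j + u, by omega⟩) * A (Fin.snoc a' k)) *
          add_one_mul_Fcoeff_succ_cons h

theorem fderiv_sum_Ftensor_mul_apply_single {n : ℕ} {St St' : Finset (List ℕ)}
    (hSt : ∀ l, l ∈ St ↔ (l ≠ [] ∧ l.sum = n + 1 ∧ ∀ s ∈ l.tail, 2 ≤ s))
    (hSt' : ∀ l, l ∈ St' ↔ (l ≠ [] ∧ l.sum = n ∧ ∀ s ∈ l.tail, 2 ≤ s))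
    {A : (Fin (n + 1) → Fin d) → ℝ} (hA : ∀ (σ : Equiv.Perm (Fin (n + 1))) a, A (a ∘ σ) = A a)
    (x : Fin d → ℝ) (k : Fin d) :
    fderiv ℝ (fun y => ∑ a, Ftensor μ M (n + 1) St y a * A a) x (Pi.single k 1) =
      (n + 1) * ∑ a', Ftensor μ M n St' x a' * A (Fin.snoc a' k) := by
  set D := fun l =>
    ∑ a, fderiv ℝ (fun y => FtensorTerm μ M (n + 1) l y a) x (Pi.single k 1) * A a
  set succHead := fun l : List ℕ => (l.headI + 1) :: l.tail
  have hsub : St'.image succHead ⊆ St := by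
    intro l hl
    obtain ⟨l', hl', rfl⟩ := mem_image.mp hl
    obtain ⟨hne, hsum, htail⟩ := (hSt' l').mp hl'
    obtain ⟨j, tl, rfl⟩ := List.exists_cons_of_ne_nil hne
    exact (hSt _).mpr ⟨List.cons_ne_nil _ _, by simp_all [succHead]; omega,
      by simpa [succHead] using htail⟩
  have hzero : ∀ l ∈ St, l ∉ St'.image succHead → D l = 0 := by
    intro l hl hnot
    obtain ⟨hne, hsum, htail⟩ := (hSt l).mp hl
    obtain ⟨_ | j, tl, rfl⟩ := List.exists_cons_of_ne_nil hne
    · simp [D, fderiv_FtensorTerm_zero_cons]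
    · exact absurd (mem_image.mpr ⟨j :: tl, (hSt' _).mpr ⟨List.cons_ne_nil _ _,
        by simp_all; omega, by simpa using htail⟩, rfl⟩) hnot
  have hinj : Set.InjOn succHead St' := by
    intro l₁ h₁ l₂ h₂ heq
    obtain ⟨j₁, tl₁, rfl⟩ := List.exists_cons_of_ne_nil ((hSt' _).mp h₁).1
    obtain ⟨j₂, tl₂, rfl⟩ := List.exists_cons_of_ne_nil ((hSt' _).mp h₂).1
    simpa [succHead] using heq
  rw [fderiv_sum_Ftensor_mul_apply, ← sum_subset hsub hzero, sum_image hinj]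
  simp_rw [Ftensor_eq_sum_FtensorTerm, sum_mul]
  rw [sum_comm (s := (univ : Finset (Fin n → Fin d))), mul_sum]
  refine sum_congr rfl fun l hl => ?_
  obtain ⟨hne, hsum, -⟩ := (hSt' l).mp hl
  obtain ⟨j, tl, rfl⟩ := List.exists_cons_of_ne_nil hne
  exact sum_fderiv_FtensorTerm_succ_cons_mul μ M (by simpa using hsum) hA x k

end

theorem stmt_11_general {d : ℕ} (t : ℕ) (ht : 1 ≤ t) (μ : Fin d → ℝ)
    (M : (j : ℕ) → (Fin j → Fin d) → ℝ)
    (St St' : Finset (List ℕ))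
    (hSt : ∀ l, l ∈ St ↔ (l ≠ [] ∧ l.sum = t ∧ ∀ s ∈ l.tail, 2 ≤ s))
    (hSt' : ∀ l, l ∈ St' ↔ (l ≠ [] ∧ l.sum = t - 1 ∧ ∀ s ∈ l.tail, 2 ≤ s))
    (A : (Fin t → Fin d) → ℝ)
    (hA : ∀ (σ : Equiv.Perm (Fin t)) (a : Fin t → Fin d), A (a ∘ σ) = A a) :
    ∀ (x : Fin d → ℝ) (k : Fin d),
      fderiv ℝ (fun y => ∑ a : Fin t → Fin d, Ftensor μ M t St y a * A a) x (Pi.single k 1)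
        = t * ∑ a' : Fin (t - 1) → Fin d,
            Ftensor μ M (t - 1) St' x a' *
            A (fun i => if h : i.val < t - 1 then a' ⟨i.val, h⟩ else k) := by
  intro x k
  obtain ⟨n, rfl⟩ : ∃ n, t = n + 1 := ⟨t - 1, by omega⟩
  exact_mod_cast fderiv_sum_Ftensor_mul_apply_single μ M hSt hSt' hA x k

/-- For every symmetric order-`t` tensor `A` (and symmetric fixed tensors `M_j`),
`∇⟨F_t(x), A⟩ = t ⟨F_{t-1}(x) ⊗ I, A⟩`, i.e. the directional derivative along the `k`-th
coordinate equals `t Σ_{a'} F_{t-1}(x)_{a'} A_{(a', k)}`. -/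
theorem stmt_11 {d : ℕ} (t : ℕ) (ht : 1 ≤ t) (μ : Fin d → ℝ)
    (M : (j : ℕ) → (Fin j → Fin d) → ℝ)
    (hMsymm : ∀ (j : ℕ) (σ : Equiv.Perm (Fin j)) (a : Fin j → Fin d), M j (a ∘ σ) = M j a)
    (St St' : Finset (List ℕ))
    (hSt : ∀ l, l ∈ St ↔ (l ≠ [] ∧ l.sum = t ∧ ∀ s ∈ l.tail, 2 ≤ s))
    (hSt' : ∀ l, l ∈ St' ↔ (l ≠ [] ∧ l.sum = t - 1 ∧ ∀ s ∈ l.tail, 2 ≤ s))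
    (A : (Fin t → Fin d) → ℝ)
    (hA : ∀ (σ : Equiv.Perm (Fin t)) (a : Fin t → Fin d), A (a ∘ σ) = A a) :
    ∀ (x : Fin d → ℝ) (k : Fin d),
      fderiv ℝ (fun y => ∑ a : Fin t → Fin d, Ftensor μ M t St y a * A a) x (Pi.single k 1)
        = t * ∑ a' : Fin (t - 1) → Fin d,
            Ftensor μ M (t - 1) St' x a' *
            A (fun i => if h : i.val < t - 1 then a' ⟨i.val, h⟩ else k) :=
  stmt_11_general t ht μ M St St' hSt hSt' A hA
end

section
/- Let x₁, ..., x_n ∈ ℝ^d, w₁, ..., w_n ∈ ℝ^d, S ⊆ {1,...,n} with mean μ̂ of {x_i : i ∈ S}, and suppose: (a) ‖w_i − μ̂‖₂ ≤ ρ for all i ∈ S, and (b) for every unit vector v, Σ_{i=1}^n ⟨x_i − w_i, v⟩^{2t} ≤ K. Then for every subset S' ⊆ S with |S'| ≥ βn, the mean of {x_i : i ∈ S'} satisfies ‖(1/|S'|)Σ_{i∈S'}(x_i − μ̂)‖₂ ≤ ρ + (K/(βn))^{1/2t}. -/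
/-!
Split `xᵢ - μ̂ = (xᵢ - wᵢ) + (wᵢ - μ̂)`. The mean of the second part over `S'` has norm at most
`ρ` by the triangle inequality. The norm of the mean of the first part is its largest inner
product with a unit vector `v`, and for each `v` the power-mean inequality bounds the mean of
`⟨xᵢ - wᵢ, v⟩` over `S'` by `(|S'|⁻¹ Σᵢ ⟨xᵢ - wᵢ, v⟩^{2t})^{1/2t} ≤ (K/(βn))^{1/2t}`.
-/

open Finset RealInnerProductSpace

namespace Real

theorem inv_card_mul_sum_le_rpow_of_even {ι : Type*} (s : Finset ι) (f : ι → ℝ) {p : ℕ}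
    (hp : Even p) (hp0 : p ≠ 0) :
    (#s : ℝ)⁻¹ * ∑ i ∈ s, f i ≤ ((#s : ℝ)⁻¹ * ∑ i ∈ s, f i ^ p) ^ (p⁻¹ : ℝ) := by
  rcases s.eq_empty_or_nonempty with rfl | hs
  · simp [hp0]
  have hweights : ∑ _i ∈ s, (#s : ℝ)⁻¹ = 1 := by
    rw [sum_const, nsmul_eq_mul, mul_inv_cancel₀ (by simp [hs.ne_empty])]
  have hpow := pow_arith_mean_le_arith_mean_pow_of_even s (fun _ => (#s : ℝ)⁻¹) f
    (fun _ _ => by positivity) hweights hp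
  rw [← mul_sum, ← mul_sum, ← hp.pow_abs] at hpow
  refine (le_abs_self _).trans ?_
  rw [le_rpow_inv_iff_of_pos (abs_nonneg _) ((by positivity : (0 : ℝ) ≤ _).trans hpow)
    (by positivity), rpow_natCast]
  exact hpow

end Real

theorem norm_le_of_forall_inner_le {E : Type*} [NormedAddCommGroup E] [InnerProductSpace ℝ E]
    {u : E} {R : ℝ} (hR : 0 ≤ R) (h : ∀ v : E, ‖v‖ = 1 → ⟪u, v⟫ ≤ R) : ‖u‖ ≤ R := by
  rcases eq_or_ne u 0 with rfl | hu
  · simpa using hR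
  have := h (‖u‖⁻¹ • u) (norm_smul_inv_norm hu)
  rwa [real_inner_smul_right, real_inner_self_eq_norm_sq, sq, ← mul_assoc,
    inv_mul_cancel₀ (norm_ne_zero_iff.mpr hu), one_mul] at this

theorem norm_inv_card_smul_sum_le {ι E : Type*} [SeminormedAddCommGroup E] [NormedSpace ℝ E]
    (s : Finset ι) (f : ι → E) {ρ : ℝ} (hρ : 0 ≤ ρ) (hf : ∀ i ∈ s, ‖f i‖ ≤ ρ) :
    ‖(#s : ℝ)⁻¹ • ∑ i ∈ s, f i‖ ≤ ρ := by
  rcases s.eq_empty_or_nonempty with rfl | hs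
  · simpa using hρ
  have hcard : (0 : ℝ) < #s := by simp [hs]
  rw [norm_smul, norm_inv, Real.norm_natCast, inv_mul_le_iff₀ hcard]
  simpa using norm_sum_le_of_le s hf

theorem norm_inv_card_smul_sum_le_of_sum_inner_pow_le {ι E : Type*} [Fintype ι]
    [NormedAddCommGroup E] [InnerProductSpace ℝ E] (y : ι → E) {p : ℕ} (hp : Even p)
    (hp0 : p ≠ 0) {K : ℝ} (hK : 0 ≤ K) (hy : ∀ v : E, ‖v‖ = 1 → ∑ i, ⟪y i, v⟫ ^ p ≤ K)
    (s : Finset ι) :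
    ‖(#s : ℝ)⁻¹ • ∑ i ∈ s, y i‖ ≤ (K / #s) ^ (p⁻¹ : ℝ) := by
  refine norm_le_of_forall_inner_le (by positivity) fun v hv => ?_
  rw [real_inner_smul_left, sum_inner]
  refine (Real.inv_card_mul_sum_le_rpow_of_even s _ hp hp0).trans ?_
  have hsub : ∑ i ∈ s, ⟪y i, v⟫ ^ p ≤ K :=
    (sum_le_sum_of_subset_of_nonneg (subset_univ s) fun i _ _ => hp.pow_nonneg (⟪y i, v⟫)).trans (hy v hv)
  rw [inv_mul_eq_div]
  gcongr
  exact div_nonneg (sum_nonneg fun i _ => hp.pow_nonneg (⟪y i, v⟫)) (Nat.cast_nonneg _)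

theorem stmt_15_general {d n t : ℕ} (ht : 1 ≤ t) (hn : 0 < n)
    (x w : Fin n → EuclideanSpace ℝ (Fin d))
    (S : Finset (Fin n))
    (ρ K β : ℝ) (hρ : 0 ≤ ρ) (hK : 0 ≤ K) (hβ : 0 < β)
    (muhat : EuclideanSpace ℝ (Fin d))
    (ha : ∀ i ∈ S, ‖w i - muhat‖ ≤ ρ)
    (hb : ∀ v : EuclideanSpace ℝ (Fin d), ‖v‖ = 1 →
      ∑ i : Fin n, (inner ℝ (x i - w i) v : ℝ) ^ (2 * t) ≤ K) :
    ∀ S' ⊆ S, β * n ≤ (S'.card : ℝ) →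
      ‖(S'.card : ℝ)⁻¹ • ∑ i ∈ S', (x i - muhat)‖
        ≤ ρ + (K / (β * n)) ^ ((1 : ℝ) / (2 * t)) := by
  intro S' hS' hcard
  have hβn : 0 < β * n := by positivity
  have hsplit : (#S' : ℝ)⁻¹ • ∑ i ∈ S', (x i - muhat)
      = (#S' : ℝ)⁻¹ • ∑ i ∈ S', (x i - w i) + (#S' : ℝ)⁻¹ • ∑ i ∈ S', (w i - muhat) := by
    simp only [← smul_add, ← sum_add_distrib, sub_add_sub_cancel]
  have hexponent : (1 : ℝ) / (2 * t) = ((2 * t : ℕ) : ℝ)⁻¹ := by push_cast; rw [one_div]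
  rw [hsplit, add_comm ρ, hexponent]
  refine (norm_add_le _ _).trans (add_le_add ?_
    (norm_inv_card_smul_sum_le S' _ hρ fun i hi => ha i (hS' hi)))
  calc _ ≤ (K / #S') ^ ((2 * t : ℕ) : ℝ)⁻¹ :=
        norm_inv_card_smul_sum_le_of_sum_inner_pow_le _ (even_two_mul t) (by omega) hK hb S'
    _ ≤ (K / (β * n)) ^ ((2 * t : ℕ) : ℝ)⁻¹ := by gcongr

/-- Deterministic resilience: if (a) `‖w_i − μ̂‖₂ ≤ ρ` for all `i ∈ S`, where `μ̂` is the
mean of `{x_i : i ∈ S}`, and (b) `Σ_{i=1}^n ⟨x_i − w_i, v⟩^{2t} ≤ K` for every unit vector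
`v`, then every subset `S' ⊆ S` with `|S'| ≥ βn` has
`‖(1/|S'|) Σ_{i∈S'} (x_i − μ̂)‖₂ ≤ ρ + (K/(βn))^{1/2t}`. -/
theorem stmt_15 {d n t : ℕ} (ht : 1 ≤ t) (hn : 0 < n)
    (x w : Fin n → EuclideanSpace ℝ (Fin d))
    (S : Finset (Fin n)) (hSne : S.Nonempty)
    (ρ K β : ℝ) (hρ : 0 ≤ ρ) (hK : 0 ≤ K) (hβ : 0 < β) (hβ1 : β ≤ 1)
    (muhat : EuclideanSpace ℝ (Fin d))
    (hmu : muhat = (S.card : ℝ)⁻¹ • ∑ i ∈ S, x i)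
    (ha : ∀ i ∈ S, ‖w i - muhat‖ ≤ ρ)
    (hb : ∀ v : EuclideanSpace ℝ (Fin d), ‖v‖ = 1 →
      ∑ i : Fin n, (inner ℝ (x i - w i) v : ℝ) ^ (2 * t) ≤ K) :
    ∀ S' ⊆ S, β * n ≤ (S'.card : ℝ) →
      ‖(S'.card : ℝ)⁻¹ • ∑ i ∈ S', (x i - muhat)‖
        ≤ ρ + (K / (β * n)) ^ ((1 : ℝ) / (2 * t)) :=
  stmt_15_general ht hn x w S ρ K β hρ hK hβ muhat ha hb
end

section
/- If a distribution p on ℝ^d with mean μ satisfies, with degree-2t sum-of-squares proofs, ⟨M₂, v^{⊗2}⟩ ≤ B₂‖v‖₂², ⟨M_{2t-2}, v^{⊗(2t-2)}⟩ ≤ B_{2t-2}‖v‖₂^{2t-2}, and ⟨E[F_t(x)^{⊗2}], v^{⊗2t}⟩ ≤ Λ‖v‖₂^{2t}, and moreover ⟨M_{2t} − E[F_t(x)^{⊗2}], v^{⊗2t}⟩ ≤ N·⟨M_{2t-2}⊗M₂, v^{⊗2t}⟩ with an SOS proof, then ⟨M_{2t}, v^{⊗2t}⟩ ≤ (Λ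 + N·B₂·B_{2t-2})·‖v‖₂^{2t} with a degree-2t SOS proof. -/
/-!
By hypothesis `M_{2t} ≤ Q + N M_{2t-2} M₂` and `Q ≤ Λ‖v‖^{2t}`. The product of the two sandwiches
`0 ≤ M_{2t-2} ≤ B_{2t-2}‖v‖^{2t-2}` and `0 ≤ M₂ ≤ B₂‖v‖²` is an SOS comparison because
`a'b' - ab = (a' - a) b' + a (b' - b)`; scaling it by `N = (√N)²` and adding the three
comparisons gives the bound.
-/

open MeasureTheory MvPolynomial

theorem IsSumSq.mul_sub_mul {R : Type*} [CommRing R] {a a' b b' : R}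
    (ha : IsSumSq a) (hb : IsSumSq b) (haa' : IsSumSq (a' - a)) (hbb' : IsSumSq (b' - b)) :
    IsSumSq (a' * b' - a * b) := by
  have hb' : IsSumSq b' := by simpa using hbb'.add hb
  have hsplit : a' * b' - a * b = (a' - a) * b' + a * (b' - b) := by ring
  rw [hsplit]
  exact (haa'.mul hb').add (ha.mul hbb')

theorem MvPolynomial.isSumSq_C {σ : Type*} {c : ℝ} (hc : 0 ≤ c) :
    IsSumSq (C c : MvPolynomial σ ℝ) := by
  rw [← Real.mul_self_sqrt hc, C_mul]
  exact IsSumSq.mul_self _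

theorem stmt_18_general {d : ℕ} (t : ℕ) (ht : 1 ≤ t)
    (Mpoly : ℕ → MvPolynomial (Fin d) ℝ)
    (Q : MvPolynomial (Fin d) ℝ)
    (B₂ B₂ₜ₂ Λ N : ℝ) (hN : 0 ≤ N)
    (h2 : IsSumSq (C B₂ * (∑ i, X i ^ 2) - Mpoly 2))
    (h2sos : IsSumSq (Mpoly 2))
    (h2t2 : IsSumSq (C B₂ₜ₂ * (∑ i, X i ^ 2) ^ (t - 1) - Mpoly (2 * t - 2)))
    (h2t2sos : IsSumSq (Mpoly (2 * t - 2)))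
    (hQsos : IsSumSq (C Λ * (∑ i, X i ^ 2) ^ t - Q))
    (hmix : IsSumSq (C N * (Mpoly (2 * t - 2) * Mpoly 2) - (Mpoly (2 * t) - Q))) :
    IsSumSq (C (Λ + N * B₂ * B₂ₜ₂) * (∑ i, X i ^ 2) ^ t - Mpoly (2 * t)) := by
  set v : MvPolynomial (Fin d) ℝ := ∑ i, X i ^ 2
  have hprod : IsSumSq (C B₂ₜ₂ * v ^ (t - 1) * (C B₂ * v) - Mpoly (2 * t - 2) * Mpoly 2) :=
    h2t2sos.mul_sub_mul h2sos h2t2 h2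
  have hpow : v ^ (t - 1) * v = v ^ t := by rw [← pow_succ, Nat.sub_add_cancel ht]
  have hsplit : C (Λ + N * B₂ * B₂ₜ₂) * v ^ t - Mpoly (2 * t)
      = C Λ * v ^ t - Q + (C N * (Mpoly (2 * t - 2) * Mpoly 2) - (Mpoly (2 * t) - Q))
        + C N * (C B₂ₜ₂ * v ^ (t - 1) * (C B₂ * v) - Mpoly (2 * t - 2) * Mpoly 2) := by
    rw [← hpow, C_add, C_mul, C_mul]
    ring
  rw [hsplit]
  exact (hQsos.add hmix).add ((isSumSq_C hN).mul hprod)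

/-- If, with degree-`2t` SOS proofs, `⟨M₂, v^{⊗2}⟩ ≤ B₂‖v‖²`,
`⟨M_{2t-2}, v^{⊗(2t-2)}⟩ ≤ B_{2t-2}‖v‖^{2t-2}`, `⟨E[F_t(x)^{⊗2}], v^{⊗2t}⟩ ≤ Λ‖v‖^{2t}`
(the latter written as the polynomial `Q`), and
`⟨M_{2t} − E[F_t(x)^{⊗2}], v^{⊗2t}⟩ ≤ N⟨M_{2t-2}⊗M₂, v^{⊗2t}⟩`, then
`⟨M_{2t}, v^{⊗2t}⟩ ≤ (Λ + N B₂ B_{2t-2})‖v‖^{2t}` with a degree-`2t` SOS proof.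
(The centered moment polynomials `⟨M_k, v^{⊗k}⟩` are SOS themselves, as in the context's
`0 ≤_sos a ≤_sos a'` requirement, and `N ≥ 0`.) -/
theorem stmt_18 {d : ℕ} (t : ℕ) (ht : 1 ≤ t)
    (p : Measure (Fin d → ℝ)) [IsProbabilityMeasure p]
    (μ : Fin d → ℝ) (hμ : ∀ i, μ i = ∫ x, x i ∂p)
    (F : (Fin d → ℝ) → (Fin t → Fin d) → ℝ)
    (Mpoly : ℕ → MvPolynomial (Fin d) ℝ)
    (hMpoly : ∀ k, Mpoly k = ∑ a : Fin k → Fin d,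
        C (∫ x, ∏ s, (x (a s) - μ (a s)) ∂p) * ∏ s, X (a s))
    (Q : MvPolynomial (Fin d) ℝ)
    (hQdef : Q = ∑ a : Fin t → Fin d, ∑ b : Fin t → Fin d,
        C (∫ x, F x a * F x b ∂p) * ((∏ s, X (a s)) * (∏ s, X (b s))))
    (B₂ B₂ₜ₂ Λ N : ℝ) (hN : 0 ≤ N)
    (h2 : IsSumSq (C B₂ * (∑ i, X i ^ 2) - Mpoly 2))
    (h2sos : IsSumSq (Mpoly 2))
    (h2t2 : IsSumSq (C B₂ₜ₂ * (∑ i, X i ^ 2) ^ (t - 1) - Mpoly (2 * t - 2)))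
    (h2t2sos : IsSumSq (Mpoly (2 * t - 2)))
    (hQsos : IsSumSq (C Λ * (∑ i, X i ^ 2) ^ t - Q))
    (hmix : IsSumSq (C N * (Mpoly (2 * t - 2) * Mpoly 2) - (Mpoly (2 * t) - Q))) :
    IsSumSq (C (Λ + N * B₂ * B₂ₜ₂) * (∑ i, X i ^ 2) ^ t - Mpoly (2 * t)) :=
  stmt_18_general t ht Mpoly Q B₂ B₂ₜ₂ Λ N hN h2 h2sos h2t2 h2t2sos hQsos hmix
end

section
/- Let τ₁, ..., τ_n ≥ 0 and weights c₁, ..., c_n ∈ [0,1], and let I ⊆ {1,...,n} with |I| ≥ αn. Suppose that in each iteration of a reweighting procedure that sets c_i ← c_i(1 − τ_i/τ_max) with τ_max = max_i τ_i, every iteration satisfies Σ_{i∈I} c_i τ_i ≤ (1/4)·(|I|/n)·Σ_{i=1}^n c_i τ_i. Then at termination, Σ_{i∈I}(1 − c_i) ≤ (|I|/4n)·Σ_{i=1}^n (1 − c_i), and hence (1/|I|)·Σ_{i∈I}(1 − c_i) ≤ (1 − |I|/n)/3. -/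
/-- Reweighting analysis: weights start at `c 0 i = 1`, and at each iteration `s < T` get
updated by `c (s+1) i = c s i (1 − τ s i / τmax s)` where `τmax s = max_i τ s i`. If in
every iteration `Σ_{i∈I} c_i τ_i ≤ (1/4)(|I|/n) Σ_{i=1}^n c_i τ_i`, then at termination
`Σ_{i∈I}(1 − c_i) ≤ (|I|/4n) Σ_{i=1}^n (1 − c_i)`, and hence
`(1/|I|) Σ_{i∈I}(1 − c_i) ≤ (1 − |I|/n)/3`. -/
theorem stmt_19 (n : ℕ) (hn : 0 < n) (I : Finset (Fin n)) (T : ℕ)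
    (τ : ℕ → Fin n → ℝ) (hτ : ∀ s i, 0 ≤ τ s i)
    (c : ℕ → Fin n → ℝ) (hc0 : ∀ i, c 0 i = 1)
    (hupd : ∀ s < T, ∀ i, c (s + 1) i
      = c s i * (1 - τ s i / (Finset.univ.sup' ⟨⟨0, hn⟩, Finset.mem_univ _⟩ (τ s))))
    (hiter : ∀ s < T, ∑ i ∈ I, c s i * τ s i
      ≤ (1 / 4) * ((I.card : ℝ) / n) * ∑ i : Fin n, c s i * τ s i) :
    (∑ i ∈ I, (1 - c T i) ≤ ((I.card : ℝ) / (4 * n)) * ∑ i : Fin n, (1 - c T i)) ∧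
    ((I.card : ℝ))⁻¹ * ∑ i ∈ I, (1 - c T i) ≤ (1 - (I.card : ℝ) / n) / 3 := by
  set M : ℕ → ℝ := fun s => Finset.univ.sup' ⟨⟨0, hn⟩, Finset.mem_univ _⟩ (τ s) with hMdef
  have hM0 : ∀ s, 0 ≤ M s := fun s =>
    le_trans (hτ s ⟨0, hn⟩) (Finset.le_sup' _ (Finset.mem_univ _))
  have hle : ∀ s i, τ s i ≤ M s := fun s i => Finset.le_sup' _ (Finset.mem_univ i)
  have hx0 : ∀ s i, 0 ≤ τ s i / M s := fun s i => div_nonneg (hτ s i) (hM0 s)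
  have hx1 : ∀ s i, τ s i / M s ≤ 1 := by
    intro s i
    rcases eq_or_lt_of_le (hM0 s) with h | h
    · have hτ0 : τ s i = 0 := le_antisymm (h ▸ hle s i) (hτ s i)
      simp [hτ0]
    · exact (div_le_one h).mpr (hle s i)
  -- c stays in [0,1]
  have hcub : ∀ s, s ≤ T → ∀ i, 0 ≤ c s i ∧ c s i ≤ 1 := by
    intro s
    induction s with
    | zero => intro _ i; simp [hc0]
    | succ k ih =>
      intro hs i
      have hk := ih (le_of_lt (Nat.lt_of_succ_le hs)) i
      rw [hupd k (Nat.lt_of_succ_le hs) i]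
      constructor
      · exact mul_nonneg hk.1 (by linarith [hx1 k i])
      · calc c k i * (1 - τ k i / M k)
            ≤ 1 * 1 := mul_le_mul hk.2 (by linarith [hx0 k i]) (by linarith [hx1 k i]) zero_le_one
          _ = 1 := by ring
  -- telescoping identity
  have key : ∀ S : Finset (Fin n),
      ∑ i ∈ S, (1 - c T i)
        = ∑ s ∈ Finset.range T, (∑ i ∈ S, c s i * τ s i) * (M s)⁻¹ := by
    intro S
    have h1 : ∀ i, (1 : ℝ) - c T i = ∑ s ∈ Finset.range T, (c s i - c (s + 1) i) := by
      intro i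
      rw [Finset.sum_range_sub' (fun s => c s i), hc0]
    calc ∑ i ∈ S, (1 - c T i)
        = ∑ i ∈ S, ∑ s ∈ Finset.range T, (c s i - c (s + 1) i) :=
          Finset.sum_congr rfl (fun i _ => h1 i)
      _ = ∑ s ∈ Finset.range T, ∑ i ∈ S, (c s i - c (s + 1) i) := Finset.sum_comm
      _ = ∑ s ∈ Finset.range T, (∑ i ∈ S, c s i * τ s i) * (M s)⁻¹ := by
          refine Finset.sum_congr rfl fun s hs => ?_
          rw [Finset.sum_mul]
          refine Finset.sum_congr rfl fun i _ => ?_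
          rw [hupd s (Finset.mem_range.mp hs) i]
          rw [div_eq_mul_inv]
          ring
  have part1 : ∑ i ∈ I, (1 - c T i) ≤ ((I.card : ℝ) / (4 * n)) * ∑ i : Fin n, (1 - c T i) := by
    rw [key I, key Finset.univ, Finset.mul_sum]
    refine Finset.sum_le_sum fun s hs => ?_
    have h := mul_le_mul_of_nonneg_right (hiter s (Finset.mem_range.mp hs))
      (inv_nonneg.mpr (hM0 s))
    calc (∑ i ∈ I, c s i * τ s i) * (M s)⁻¹
        ≤ (1 / 4 * ((I.card : ℝ) / n) * ∑ i : Fin n, c s i * τ s i) * (M s)⁻¹ := h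
      _ = (I.card : ℝ) / (4 * n) * ((∑ i : Fin n, c s i * τ s i) * (M s)⁻¹) := by ring
  refine ⟨part1, ?_⟩
  -- second part
  set A : ℝ := ∑ i ∈ I, (1 - c T i) with hAdef
  set m : ℝ := (I.card : ℝ) with hmdef
  have hmn : (I.card : ℕ) ≤ n := le_trans (Finset.card_le_card (Finset.subset_univ I))
    (by simp)
  have hmn' : m ≤ (n : ℝ) := by rw [hmdef]; exact_mod_cast hmn
  have hm0 : 0 ≤ m := by positivity
  have hn' : (0 : ℝ) < n := by exact_mod_cast hn
  have hA0 : 0 ≤ A := Finset.sum_nonneg fun i _ => by linarith [(hcub T le_rfl i).2]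
  rcases eq_or_lt_of_le hm0 with hm | hm
  · -- I is empty
    have hI : I = ∅ := by
      have h0 : (I.card : ℝ) = 0 := by rw [← hmdef, ← hm]
      exact Finset.card_eq_zero.mp (by exact_mod_cast h0)
    rw [hAdef, hI]
    simp only [Finset.sum_empty, mul_zero]
    rw [← hm]
    norm_num
  · -- I nonempty
    have hB : ∑ i ∈ Iᶜ, (1 - c T i) ≤ (n : ℝ) - m := by
      calc ∑ i ∈ Iᶜ, (1 - c T i) ≤ ∑ i ∈ Iᶜ, (1 : ℝ) :=
            Finset.sum_le_sum fun i _ => by linarith [(hcub T le_rfl i).1]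
        _ = (Iᶜ.card : ℝ) := by simp
        _ = (n : ℝ) - m := by
            rw [Finset.card_compl]
            simp only [hmdef, Fintype.card_fin]
            push_cast [Nat.cast_sub hmn]
            ring
    have htot : ∑ i : Fin n, (1 - c T i) ≤ A + ((n : ℝ) - m) := by
      rw [← Finset.sum_add_sum_compl I (fun i => 1 - c T i)]
      linarith
    have h1 : A * (4 * n) ≤ m * (A + ((n : ℝ) - m)) := by
      have hfrac : m / (4 * n) * (∑ i : Fin n, (1 - c T i)) * (4 * n)
          = m * (∑ i : Fin n, (1 - c T i)) := by
        field_simp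
      have h2 := mul_le_mul_of_nonneg_right part1 (le_of_lt (by positivity : (0:ℝ) < 4 * n))
      rw [hfrac] at h2
      calc A * (4 * n) ≤ m * (∑ i : Fin n, (1 - c T i)) := h2
        _ ≤ m * (A + ((n : ℝ) - m)) := mul_le_mul_of_nonneg_left htot hm0
    -- so A * (4n - m) ≤ m (n - m), and 3n ≤ 4n - m
    have h3 : A * (3 * n) ≤ m * ((n : ℝ) - m) := by nlinarith [mul_nonneg hA0 (sub_nonneg.mpr hmn')]
    rw [inv_mul_le_iff₀ hm]
    have heq : m * ((1 - m / n) / 3) = m * ((n : ℝ) - m) / (3 * n) := by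
      have h : (1 : ℝ) - m / n = ((n : ℝ) - m) / n := by
        rw [eq_div_iff (ne_of_gt hn')]; ring_nf
        rw [mul_assoc, mul_inv_cancel₀ (ne_of_gt hn'), mul_one]
      rw [h, div_div, mul_div_assoc, mul_comm (n : ℝ) 3]
    rw [heq, le_div_iff₀ (by positivity : (0:ℝ) < 3 * n)]
    linarith
end
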